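/- arXiv:1908.09133 — 6 statements merged into one kernel-verified Lean document; each statement's English description precedes it below -/
import Mathlib

section
/- Let f : ℝ → ℝ be continuously differentiable with compact support contained in [a,b], where a < b, and let s ∈ (a,b). Then the principal value integral pv ∫_{-∞}^{∞} f(t)/(s−t) dt exists (i.e., the limit as ε → 0⁺ of ∫_{|t−s|>ε} f(t)/(s−t) dt exists) and equals f(s)·log((s−a)/(b−s)) − ∫_a^b g(s,t) dt, where g(s,t) = (f(s)−f(t))/(s−t) for s ≠ t and g(s,s) = f'(s). -/
/-!
Away from `t = s` we have `f t / (s - t) = f s / (s - t) - g t`, and `g = dslope f s` is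
continuous because `f` is differentiable at `s`. Since `f` vanishes off `[a, b]`, for small `ε`
the truncated integral is the integral of this over `[a, b] \ [s - ε, s + ε]`. There the kernel
contributes `f s * (log ((s - a) / ε) + log (ε / (b - s)))`, in which `ε` cancels, while
`∫ g` over `[s - ε, s + ε]` tends to `0`.
-/

open MeasureTheory Filter Set Topology intervalIntegral

theorem dslope_eq_ite {𝕜 : Type*} [NontriviallyNormedField 𝕜] [DecidableEq 𝕜] (f : 𝕜 → 𝕜)
    (s t : 𝕜) : dslope f s t = if t = s then deriv f s else (f s - f t) / (s - t) := by
  split_ifs with h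
  · rw [h, dslope_same]
  · rw [dslope_of_ne f h, slope_def_field, ← neg_sub (f s), ← neg_sub s, neg_div_neg_eq]

theorem div_sub_eq_mul_inv_sub_dslope {𝕜 : Type*} [NontriviallyNormedField 𝕜] (f : 𝕜 → 𝕜)
    {s t : 𝕜} (h : t ≠ s) : f t / (s - t) = f s * (s - t)⁻¹ - dslope f s t := by
  classical
  rw [dslope_eq_ite, if_neg h, sub_div, ← div_eq_mul_inv, sub_sub_cancel]

theorem setOf_lt_abs_sub_eq_compl_Icc (s ε : ℝ) :
    {t : ℝ | ε < |t - s|} = (Icc (s - ε) (s + ε))ᶜ := by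
  ext t
  simp [← Real.closedBall_eq_Icc, Real.dist_eq]

theorem Icc_sdiff_Icc_eq_Ico_union_Ioc {α : Type*} [LinearOrder α] {a b c d : α}
    (hcb : c ≤ b) (had : a ≤ d) : Icc a b \ Icc c d = Ico a c ∪ Ioc d b := by
  ext t
  simp only [Set.mem_sdiff, mem_Icc, mem_union, mem_Ico, mem_Ioc, not_and_or, not_le]
  constructor
  · rintro ⟨⟨hat, htb⟩, htc | hdt⟩
    exacts [Or.inl ⟨hat, htc⟩, Or.inr ⟨hdt, htb⟩]
  · rintro (⟨hat, htc⟩ | ⟨hdt, htb⟩)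
    exacts [⟨⟨hat, htc.le.trans hcb⟩, Or.inl htc⟩, ⟨⟨had.trans hdt.le, htb⟩, Or.inr hdt⟩]

theorem integrableOn_inv_sub_of_notMem {K : Set ℝ} (hK : IsCompact K) {s : ℝ} (hs : s ∉ K) :
    IntegrableOn (fun t => (s - t)⁻¹) K :=
  ContinuousOn.integrableOn_compact hK fun _ ht =>
    ((continuousAt_const.sub continuousAt_id).inv₀
      (sub_ne_zero.2 (ne_of_mem_of_not_mem ht hs).symm)).continuousWithinAt

theorem integrableOn_inv_sub_Icc_sdiff_Icc {a b s ε : ℝ} (hε : 0 < ε) :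
    IntegrableOn (fun t => (s - t)⁻¹) (Icc a b \ Icc (s - ε) (s + ε)) :=
  (integrableOn_inv_sub_of_notMem (isCompact_Icc.diff isOpen_Ioo)
    fun h => h.2 ⟨by linarith, by linarith⟩).mono_set
    (sdiff_subset_sdiff_right Ioo_subset_Icc_self)

theorem integral_inv_sub_left {a s ε : ℝ} (hε : 0 < ε) (hεa : ε ≤ s - a) :
    ∫ t in a..(s - ε), (s - t)⁻¹ = Real.log ((s - a) / ε) := by
  rw [integral_comp_sub_left (fun x => x⁻¹) s, sub_sub_cancel,
    integral_inv (by rw [uIcc_of_le hεa]; exact fun h => hε.not_ge h.1)]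

theorem integral_inv_sub_right {b s ε : ℝ} (hε : 0 < ε) (hεb : ε ≤ b - s) :
    ∫ t in (s + ε)..b, (s - t)⁻¹ = Real.log (ε / (b - s)) := by
  rw [integral_comp_sub_left (fun x => x⁻¹) s, sub_add_cancel_left,
    integral_inv (by rw [uIcc_of_le (by linarith)]; exact fun h => hε.not_ge (by linarith [h.2])),
    ← neg_sub b s, neg_div_neg_eq]

theorem integral_inv_sub_Icc_sdiff_Icc {a b s ε : ℝ} (hε : 0 < ε) (hεa : ε ≤ s - a)
    (hεb : ε ≤ b - s) :
    ∫ t in Icc a b \ Icc (s - ε) (s + ε), (s - t)⁻¹ = Real.log ((s - a) / (b - s)) := by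
  have hint := integrableOn_inv_sub_Icc_sdiff_Icc (a := a) (b := b) (s := s) hε
  rw [Icc_sdiff_Icc_eq_Ico_union_Ioc (by linarith) (by linarith)] at hint ⊢
  rw [setIntegral_union (Set.disjoint_left.2 fun t h₁ h₂ => by linarith [h₁.2, h₂.1])
      measurableSet_Ioc (hint.mono_set subset_union_left) (hint.mono_set subset_union_right),
    integral_Ico_eq_integral_Ioc, ← integral_of_le (by linarith), ← integral_of_le (by linarith),
    integral_inv_sub_left hε hεa, integral_inv_sub_right hε hεb,
    ← Real.log_mul (div_pos (by linarith) hε).ne' (div_pos hε (by linarith)).ne']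
  congr 1
  field_simp

theorem setIntegral_lt_abs_sub_div_sub_eq {f : ℝ → ℝ} {a b s ε : ℝ}
    (hsupp : Function.support f ⊆ Icc a b) (hint : IntegrableOn (dslope f s) (Icc a b))
    (hε : 0 < ε) (hεa : ε ≤ s - a) (hεb : ε ≤ b - s) :
    ∫ t in {t | ε < |t - s|}, f t / (s - t) =
      f s * Real.log ((s - a) / (b - s)) -
        ((∫ t in a..b, dslope f s t) - ∫ t in (s - ε)..(s + ε), dslope f s t) := by
  have hI : Icc (s - ε) (s + ε) ⊆ Icc a b := Icc_subset_Icc (by linarith) (by linarith)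
  have hrestrict : ∫ t in (Icc (s - ε) (s + ε))ᶜ, f t / (s - t) =
      ∫ t in Icc a b \ Icc (s - ε) (s + ε), f t / (s - t) :=
    setIntegral_eq_of_subset_of_forall_sdiff_eq_zero measurableSet_Icc.compl
      (fun t ht => ht.2) fun t ht => by
        rw [Function.notMem_support.1 fun h => ht.2 ⟨hsupp h, ht.1⟩, zero_div]
  have hsplit : ∫ t in Icc a b \ Icc (s - ε) (s + ε), f t / (s - t) =
      ∫ t in Icc a b \ Icc (s - ε) (s + ε), f s * (s - t)⁻¹ - dslope f s t :=
    setIntegral_congr_fun (measurableSet_Icc.diff measurableSet_Icc) fun t ht =>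
      div_sub_eq_mul_inv_sub_dslope f fun h => ht.2 (h ▸ ⟨by linarith, by linarith⟩)
  rw [setOf_lt_abs_sub_eq_compl_Icc, hrestrict, hsplit,
    integral_sub ((integrableOn_inv_sub_Icc_sdiff_Icc hε).const_mul _) (hint.mono_set sdiff_subset),
    MeasureTheory.integral_const_mul,
    integral_inv_sub_Icc_sdiff_Icc hε hεa hεb,
    setIntegral_sdiff measurableSet_Icc hint hI, integral_of_le (by linarith),
    integral_of_le (by linarith), integral_Icc_eq_integral_Ioc, integral_Icc_eq_integral_Ioc]

theorem tendsto_intervalIntegral_sub_add_nhds_zero {E : Type*} [NormedAddCommGroup E]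
    [NormedSpace ℝ E] {g : ℝ → E} (hg : LocallyIntegrable g) (s : ℝ) :
    Tendsto (fun ε => ∫ t in (s - ε)..(s + ε), g t) (𝓝 0) (𝓝 0) := by
  have hint (u v : ℝ) : IntervalIntegrable g volume u v :=
    (hg.integrableOn_isCompact isCompact_uIcc).intervalIntegrable
  have hF := continuous_primitive hint s
  have hcont : Continuous fun ε => (∫ t in s..(s + ε), g t) - ∫ t in s..(s - ε), g t :=
    (hF.comp (continuous_const_add s)).sub (hF.comp (continuous_sub_left s))
  have h := hcont.tendsto 0
  simp only [add_zero, sub_zero, sub_self] at h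
  exact h.congr fun ε => integral_interval_sub_left (hint _ _) (hint _ _)

theorem stmt_0_general (f : ℝ → ℝ) (a b s : ℝ)
    (hf : ContDiff ℝ 1 f) (hsupp : tsupport f ⊆ Icc a b)
    (hs : s ∈ Ioo a b)
    (g : ℝ → ℝ)
    (hg : ∀ t : ℝ, g t = if t = s then deriv f s else (f s - f t) / (s - t)) :
    Tendsto (fun ε : ℝ => ∫ t in {t : ℝ | ε < |t - s|}, f t / (s - t))
      (nhdsWithin 0 (Ioi 0))
      (nhds (f s * Real.log ((s - a) / (b - s)) - ∫ t in a..b, g t)) := by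
  obtain rfl : g = dslope f s := funext fun t => (hg t).trans (dslope_eq_ite f s t).symm
  have hgc : Continuous (dslope f s) := continuousOn_univ.1 <| (continuousOn_dslope univ_mem).2
    ⟨hf.continuous.continuousOn, hf.differentiable one_ne_zero s⟩
  have hlim := (tendsto_intervalIntegral_sub_add_nhds_zero hgc.locallyIntegrable s).mono_left
    (nhdsWithin_le_nhds (s := Ioi 0))
  have hδ : 0 < min (s - a) (b - s) := lt_min (sub_pos.2 hs.1) (sub_pos.2 hs.2)
  have hT := (tendsto_const_nhds (x := f s * Real.log ((s - a) / (b - s)))).sub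
    ((tendsto_const_nhds (x := ∫ t in a..b, dslope f s t)).sub hlim)
  rw [sub_zero] at hT
  refine hT.congr' ?_
  filter_upwards [Ioo_mem_nhdsGT hδ] with ε ⟨hε, hεδ⟩
  exact (setIntegral_lt_abs_sub_div_sub_eq (subset_tsupport f |>.trans hsupp)
    (hgc.integrableOn_Icc) hε (hεδ.le.trans (min_le_left _ _))
    (hεδ.le.trans (min_le_right _ _))).symm

/-- For `f : ℝ → ℝ` continuously differentiable with compact support
contained in `[a,b]`, `a < b`, and `s ∈ (a,b)`, the principal value integral
`pv ∫ f(t)/(s-t) dt` exists and equals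
`f(s) log((s-a)/(b-s)) - ∫_a^b g(s,t) dt` where `g(s,t) = (f(s)-f(t))/(s-t)`,
`g(s,s) = f'(s)`. -/
theorem stmt_0 (f : ℝ → ℝ) (a b s : ℝ) (hab : a < b)
    (hf : ContDiff ℝ 1 f) (hsupp : tsupport f ⊆ Icc a b)
    (hs : s ∈ Ioo a b)
    (g : ℝ → ℝ)
    (hg : ∀ t : ℝ, g t = if t = s then deriv f s else (f s - f t) / (s - t)) :
    Tendsto (fun ε : ℝ => ∫ t in {t : ℝ | ε < |t - s|}, f t / (s - t))
      (nhdsWithin 0 (Ioi 0))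
      (nhds (f s * Real.log ((s - a) / (b - s)) - ∫ t in a..b, g t)) :=
  stmt_0_general f a b s hf hsupp hs g hg
end

section
/- Let f : ℝ → ℝ be continuously differentiable with compact support contained in [a,b], where a < b. Then the principal value integral pv ∫_{-∞}^{∞} f(t)/(a−t) dt exists and equals ∫_a^b g_a(t) dt, where g_a(t) = f(t)/(a−t) for t > a and g_a(a) = 0. -/
open MeasureTheory Filter Set

/-! Since `f` vanishes on `(-∞, a)`, both `f a` and `f' a` vanish, so `t ↦ f t / (a - t)` equals
`-dslope f a`, the continuous extension of the difference quotient; with `x / 0 = 0` it is also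
exactly `g_a`. For `0 < ε < b - a` the truncated integral is `∫_{a+ε}^b` of this continuous
function, which tends to `∫_a^b` as `ε → 0⁺`. -/

lemma eq_zero_of_eqOn_Iio {f : ℝ → ℝ} {a : ℝ} (hf : ContinuousAt f a) (h : EqOn f 0 (Iio a)) :
    f a = 0 :=
  tendsto_nhds_unique (hf.tendsto.mono_left nhdsWithin_le_nhds)
    (tendsto_const_nhds.congr' (eventuallyEq_nhdsWithin_of_eqOn h).symm)

lemma deriv_eq_zero_of_eqOn_Iio {f : ℝ → ℝ} {a : ℝ} (hf : DifferentiableAt ℝ f a)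
    (h : EqOn f 0 (Iio a)) : deriv f a = 0 :=
  (uniqueDiffWithinAt_Iio a).eq_deriv _ hf.hasDerivAt.hasDerivWithinAt
    ((hasDerivWithinAt_const a (Iio a) (0 : ℝ)).congr h (eq_zero_of_eqOn_Iio hf.continuousAt h))

lemma div_sub_eq_neg_dslope {f : ℝ → ℝ} {a : ℝ} (hf : DifferentiableAt ℝ f a)
    (h : EqOn f 0 (Iio a)) : (fun t => f t / (a - t)) = -dslope f a := by
  funext t
  rcases eq_or_ne t a with rfl | hta
  · simp [dslope_same, deriv_eq_zero_of_eqOn_Iio hf h]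
  · rw [Pi.neg_apply, dslope_of_ne f hta, slope_def_field, eq_zero_of_eqOn_Iio hf.continuousAt h,
      sub_zero, ← div_neg, neg_sub]

lemma continuous_div_sub_of_eqOn_Iio {f : ℝ → ℝ} {a : ℝ} (hf : Continuous f)
    (hfa : DifferentiableAt ℝ f a) (h : EqOn f 0 (Iio a)) :
    Continuous fun t => f t / (a - t) := by
  rw [div_sub_eq_neg_dslope hfa h, ← continuousOn_univ]
  exact ((continuousOn_dslope univ_mem).2 ⟨hf.continuousOn, hfa⟩).neg

lemma setIntegral_lt_abs_sub_eq_intervalIntegral {g : ℝ → ℝ} {a b ε : ℝ}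
    (hg : ∀ t ∉ Icc a b, g t = 0) (hε : 0 ≤ ε) (hεb : a + ε ≤ b) :
    ∫ t in {t : ℝ | ε < |t - a|}, g t = ∫ t in (a + ε)..b, g t := by
  have hind : (Icc a b).indicator g = g :=
    indicator_eq_self.2 fun t ht => by_contra fun h => ht (hg t h)
  have hset : {t : ℝ | ε < |t - a|} ∩ Icc a b = Ioc (a + ε) b := by
    ext t
    simp only [mem_inter_iff, mem_ofPred_eq, mem_Icc, mem_Ioc, lt_abs]
    constructor
    · rintro ⟨h | h, hat, htb⟩ <;> constructor <;> linarith
    · rintro ⟨hat, htb⟩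
      exact ⟨Or.inl (by linarith), by linarith, htb⟩
  rw [intervalIntegral.integral_of_le hεb, ← hset, ← setIntegral_indicator measurableSet_Icc, hind]

lemma tendsto_setIntegral_lt_abs_sub {g : ℝ → ℝ} {a b : ℝ} (hab : a < b) (hg : Continuous g)
    (hg0 : ∀ t ∉ Icc a b, g t = 0) :
    Tendsto (fun ε : ℝ => ∫ t in {t : ℝ | ε < |t - a|}, g t) (nhdsWithin 0 (Ioi 0))
      (nhds (∫ t in a..b, g t)) := by
  have hprim : Continuous fun u => ∫ t in u..b, g t := by
    simp only [intervalIntegral.integral_symm b]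
    exact (intervalIntegral.continuous_primitive (fun _ _ => hg.intervalIntegrable _ _) b).neg
  have hshift : Tendsto (fun ε => a + ε) (nhdsWithin 0 (Ioi 0)) (nhds a) := by
    simpa using (tendsto_const_nhds.add tendsto_id).mono_left (nhdsWithin_le_nhds (a := (0 : ℝ)))
  refine ((hprim.tendsto a).comp hshift).congr' ?_
  filter_upwards [Ioo_mem_nhdsGT (sub_pos.2 hab)] with ε hε
  exact (setIntegral_lt_abs_sub_eq_intervalIntegral hg0 hε.1.le (by linarith [hε.2])).symm

/-- For `f : ℝ → ℝ` continuously differentiable with compact support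
contained in `[a,b]`, `a < b`, the principal value integral `pv ∫ f(t)/(a-t) dt`
exists and equals `∫_a^b g_a(t) dt` where `g_a(t) = f(t)/(a-t)` for `t > a` and
`g_a(a) = 0`. -/
theorem stmt_2 (f : ℝ → ℝ) (a b : ℝ) (hab : a < b)
    (hf : ContDiff ℝ 1 f) (hsupp : tsupport f ⊆ Icc a b)
    (gA : ℝ → ℝ)
    (hgA : ∀ t : ℝ, gA t = if t = a then 0 else f t / (a - t)) :
    Tendsto (fun ε : ℝ => ∫ t in {t : ℝ | ε < |t - a|}, f t / (a - t))
      (nhdsWithin 0 (Ioi 0))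
      (nhds (∫ t in a..b, gA t)) := by
  have hf0 : ∀ t ∉ Icc a b, f t = 0 := fun t ht =>
    image_eq_zero_of_notMem_tsupport fun h => ht (hsupp h)
  have hgA_eq : gA = fun t => f t / (a - t) := by
    funext t
    rw [hgA]
    split_ifs with hta
    · simp [hta]
    · rfl
  rw [hgA_eq]
  refine tendsto_setIntegral_lt_abs_sub hab ?_ fun t ht => by simp [hf0 t ht]
  refine continuous_div_sub_of_eqOn_Iio hf.continuous (hf.differentiable one_ne_zero a) ?_
  exact fun t ht => hf0 t fun h => (not_lt.2 h.1) ht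
end

section
/- Let f : ℝ → ℝ be continuously differentiable with compact support contained in [a,b], where a < b. Then the principal value integral pv ∫_{-∞}^{∞} f(t)/(b−t) dt exists and equals ∫_a^b g_b(t) dt, where g_b(t) = f(t)/(b−t) for t < b and g_b(b) = 0. -/
/-! Since `f` is Lipschitz and `f b = 0`, the kernel `f t / (b - t)` is bounded; vanishing outside
`[a, b]`, it is integrable. The truncated integrals are then integrals of indicator functions
converging to it off the null set `{b}`, so dominated convergence gives the principal value. -/

open MeasureTheory Filter Set Topology NNReal

theorem Continuous.apply_eq_zero_of_support_subset_Iic {E : Type*} [TopologicalSpace E]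
    [T2Space E] [Zero E] {f : ℝ → E} (hf : Continuous f) {b : ℝ}
    (hsupp : Function.support f ⊆ Iic b) : f b = 0 := by
  have hzero : EqOn f 0 (Ioi b) := fun t ht =>
    Function.notMem_support.1 fun h => not_le.2 ht (hsupp h).out
  exact hzero.closure hf continuous_const (by simp [closure_Ioi])

theorem LipschitzWith.norm_div_sub_le {f : ℝ → ℝ} {C : ℝ≥0} (hf : LipschitzWith C f) {b : ℝ}
    (hb : f b = 0) (t : ℝ) : ‖f t / (b - t)‖ ≤ C := by
  rcases eq_or_ne t b with rfl | htb
  · simp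
  have hdist : ‖f t‖ ≤ C * ‖b - t‖ := by
    simpa [hb, Real.dist_eq, abs_sub_comm] using hf.dist_le_mul t b
  rw [norm_div]
  exact div_le_of_le_mul₀ (norm_nonneg _) C.coe_nonneg hdist

theorem ContDiff.integrable_div_sub {f : ℝ → ℝ} (hf : ContDiff ℝ 1 f) {a b : ℝ}
    (hsupp : Function.support f ⊆ Icc a b) (hb : f b = 0) :
    Integrable fun t => f t / (b - t) := by
  obtain ⟨C, hC⟩ := hf.lipschitzWith_of_hasCompactSupport
    (HasCompactSupport.of_support_subset_isCompact isCompact_Icc hsupp) one_ne_zero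
  have hmeas : Measurable fun t => f t / (b - t) :=
    hf.continuous.measurable.div (measurable_const.sub measurable_id)
  refine (integrableOn_iff_integrable_of_support_subset
    ((Function.support_div _ _).trans_subset (inter_subset_left.trans hsupp))).1 ?_
  exact IntegrableOn.of_bound measure_Icc_lt_top hmeas.aestronglyMeasurable C
    (ae_of_all _ (hC.norm_div_sub_le hb))

theorem tendsto_setIntegral_abs_sub_gt {E : Type*} [NormedAddCommGroup E] [NormedSpace ℝ E]
    {g : ℝ → E} (hg : Integrable g) (b : ℝ) :
    Tendsto (fun ε : ℝ => ∫ t in {t : ℝ | ε < |t - b|}, g t) (𝓝[>] 0) (𝓝 (∫ t, g t)) := by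
  have hmeas : ∀ ε : ℝ, MeasurableSet {t : ℝ | ε < |t - b|} := fun ε =>
    measurableSet_lt measurable_const (measurable_id.sub measurable_const).abs
  simp_rw [← integral_indicator (hmeas _)]
  refine tendsto_integral_filter_of_dominated_convergence (fun t => ‖g t‖)
    (Eventually.of_forall fun ε => hg.aestronglyMeasurable.indicator (hmeas ε))
    (Eventually.of_forall fun ε => ae_of_all _ fun t => norm_indicator_le_norm_self _ _)
    hg.norm ?_
  filter_upwards [Measure.ae_ne volume b] with t htb
  refine tendsto_const_nhds.congr' ?_
  filter_upwards [nhdsWithin_le_nhds (eventually_lt_nhds (abs_pos.2 (sub_ne_zero.2 htb)))]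
    with ε hε
  exact (indicator_of_mem (s := {t : ℝ | ε < |t - b|}) hε g).symm

/-- For `f : ℝ → ℝ` continuously differentiable with compact support
contained in `[a,b]`, `a < b`, the principal value integral `pv ∫ f(t)/(b-t) dt`
exists and equals `∫_a^b g_b(t) dt` where `g_b(t) = f(t)/(b-t)` for `t < b` and
`g_b(b) = 0`. -/
theorem stmt_3 (f : ℝ → ℝ) (a b : ℝ) (hab : a < b)
    (hf : ContDiff ℝ 1 f) (hsupp : tsupport f ⊆ Icc a b)
    (gB : ℝ → ℝ)
    (hgB : ∀ t : ℝ, gB t = if t = b then 0 else f t / (b - t)) :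
    Tendsto (fun ε : ℝ => ∫ t in {t : ℝ | ε < |t - b|}, f t / (b - t))
      (nhdsWithin 0 (Ioi 0))
      (nhds (∫ t in a..b, gB t)) := by
  have hsupp' : Function.support f ⊆ Icc a b := (subset_tsupport f).trans hsupp
  have hb : f b = 0 :=
    hf.continuous.apply_eq_zero_of_support_subset_Iic (hsupp'.trans Icc_subset_Iic_self)
  -- `x / 0 = 0`, so the case split in `gB` is already built into the division.
  have hgB' : gB = fun t => f t / (b - t) := funext fun t => by
    rw [hgB]; split_ifs with h <;> simp [h]
  have hvanish : ∀ t ∉ Icc a b, f t / (b - t) = 0 := fun t ht => by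
    rw [Function.notMem_support.1 (fun h => ht (hsupp' h)), zero_div]
  rw [hgB', intervalIntegral.integral_of_le hab.le, ← integral_Icc_eq_integral_Ioc,
    setIntegral_eq_integral_of_forall_compl_eq_zero hvanish]
  exact tendsto_setIntegral_abs_sub_gt (hf.integrable_div_sub hsupp' hb) b
end

section
/- Let f : ℝ → ℝ be continuously differentiable with compact support contained in [a,b], where a < b, and let a' ≤ a and b ≤ b' with [a,b] ⊆ [a',b']. Then for every s ∈ (a,b): f(s)·log((s−a)/(b−s)) − ∫_a^b g(s,t) dt = f(s)·log((s−a')/(b'−s)) − ∫_{a'}^{b'} g(s,t) dt, where g(s,t) = (f(s)−f(t))/(s−t) for s ≠ t and g(s,s) = f'(s). -/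
/-!
The integrand `g s` is the difference quotient `dslope f s`, which is continuous since `f` is `C¹`.
On `[a', a]` and `[b, b']` the function `f` vanishes, so there `g s t = f s / (s - t)` and the
extra integrals equal `f s · log ((s - a') / (s - a))` and `f s · log ((s - b) / (s - b'))`; these
are exactly the changes of the logarithmic term.
-/

open Set Real intervalIntegral

theorem Continuous.eqOn_zero_compl_interior_of_tsupport_subset {X M : Type*} [TopologicalSpace X]
    [Zero M] [TopologicalSpace M] [T2Space M] {f : X → M} {K : Set X} (hf : Continuous f)
    (h : tsupport f ⊆ K) : EqOn f 0 (interior K)ᶜ := by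
  rw [← closure_compl]
  exact EqOn.closure (fun x hx ↦ image_eq_zero_of_notMem_tsupport fun hx' ↦ hx (h hx'))
    hf continuous_const

theorem Continuous.dslope {𝕜 E : Type*} [NontriviallyNormedField 𝕜] [NormedAddCommGroup E]
    [NormedSpace 𝕜 E] {f : 𝕜 → E} {a : 𝕜} (hf : Continuous f) (hfa : DifferentiableAt 𝕜 f a) :
    Continuous (dslope f a) :=
  continuousOn_univ.1 <| (continuousOn_dslope Filter.univ_mem).2 ⟨hf.continuousOn, hfa⟩

theorem log_div_sub_eq_add_log_div {a b a' b' s : ℝ} (ha' : a' ≤ a) (hsa : a < s) (hsb : s < b)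
    (hb' : b ≤ b') : log ((s - a') / (b' - s))
      = log ((s - a') / (s - a)) + log ((s - a) / (b - s)) + log ((s - b) / (s - b')) := by
  have h1 : 0 < (s - a') / (s - a) := div_pos (by linarith) (by linarith)
  have h2 : 0 < (s - a) / (b - s) := div_pos (by linarith) (by linarith)
  have h3 : 0 < (s - b) / (s - b') := div_pos_of_neg_of_neg (by linarith) (by linarith)
  rw [← log_mul h1.ne' h2.ne', ← log_mul (mul_pos h1 h2).ne' h3.ne', ← neg_div_neg_eq (s - b),
    neg_sub, neg_sub, div_mul_div_cancel₀ (by linarith), div_mul_div_cancel₀ (by linarith)]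

theorem integral_inv_const_sub {s c d : ℝ} (hs : s ∉ uIcc c d) :
    ∫ t in c..d, (s - t)⁻¹ = log ((s - c) / (s - d)) := by
  rw [integral_comp_sub_left (fun x ↦ x⁻¹), integral_inv]
  rw [mem_uIcc] at hs ⊢
  grind

theorem integral_dslope_of_eqOn_zero {f : ℝ → ℝ} {s c d : ℝ} (hf : EqOn f 0 (uIcc c d))
    (hs : s ∉ uIcc c d) : ∫ t in c..d, dslope f s t = f s * log ((s - c) / (s - d)) := by
  rw [← integral_inv_const_sub hs, ← integral_const_mul]
  refine integral_congr fun t ht ↦ ?_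
  have hts : t ≠ s := ne_of_mem_of_not_mem ht hs
  rw [dslope_of_ne _ hts, slope_def_field, hf ht, Pi.zero_apply, zero_sub, neg_div, ← div_neg,
    neg_sub, div_eq_mul_inv]

theorem stmt_6_general (f : ℝ → ℝ) (a b a' b' : ℝ)
    (hf : ContDiff ℝ 1 f) (hsupp : tsupport f ⊆ Icc a b)
    (ha' : a' ≤ a) (hb' : b ≤ b')
    (g : ℝ → ℝ → ℝ)
    (hg : ∀ s t : ℝ, g s t = if t = s then deriv f s else (f s - f t) / (s - t)) :
    ∀ s ∈ Ioo a b,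
      f s * Real.log ((s - a) / (b - s)) - ∫ t in a..b, g s t
        = f s * Real.log ((s - a') / (b' - s)) - ∫ t in a'..b', g s t := by
  rintro s ⟨hsa, hsb⟩
  have hgs : g s = dslope f s := funext fun t ↦ by
    rcases eq_or_ne t s with rfl | hts
    · simp [hg]
    · rw [hg, if_neg hts, dslope_of_ne _ hts, slope_def_field, ← neg_div_neg_eq, neg_sub, neg_sub]
  have hcont : Continuous (dslope f s) :=
    hf.continuous.dslope (hf.differentiable one_ne_zero s)
  have hvanish := hf.continuous.eqOn_zero_compl_interior_of_tsupport_subset hsupp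
  rw [interior_Icc] at hvanish
  have hleft : ∫ t in a'..a, dslope f s t = f s * log ((s - a') / (s - a)) := by
    refine integral_dslope_of_eqOn_zero (hvanish.mono fun t ht ↦ ?_) fun hs ↦ ?_
    · rw [uIcc_of_le ha'] at ht; exact fun h ↦ ht.2.not_gt h.1
    · rw [uIcc_of_le ha'] at hs; exact hs.2.not_gt hsa
  have hright : ∫ t in b..b', dslope f s t = f s * log ((s - b) / (s - b')) := by
    refine integral_dslope_of_eqOn_zero (hvanish.mono fun t ht ↦ ?_) fun hs ↦ ?_
    · rw [uIcc_of_le hb'] at ht; exact fun h ↦ ht.1.not_gt h.2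
    · rw [uIcc_of_le hb'] at hs; exact hs.1.not_gt hsb
  rw [hgs, ← integral_add_adjacent_intervals (hcont.intervalIntegrable a' a)
    (hcont.intervalIntegrable a b'), ← integral_add_adjacent_intervals
    (hcont.intervalIntegrable a b) (hcont.intervalIntegrable b b'), hleft, hright,
    log_div_sub_eq_add_log_div ha' hsa hsb hb']
  ring

/-- For `f : ℝ → ℝ` continuously differentiable with compact support
contained in `[a,b]`, `a < b`, and any larger interval `[a',b'] ⊇ [a,b]`, the two
expressions for the principal value `pv ∫ f(t)/(s-t) dt` agree for every `s ∈ (a,b)`: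
`f(s)·log((s-a)/(b-s)) - ∫_a^b g(s,t) dt = f(s)·log((s-a')/(b'-s)) - ∫_{a'}^{b'} g(s,t) dt`,
where `g(s,t) = (f(s)-f(t))/(s-t)`, `g(s,s) = f'(s)`. -/
theorem stmt_6 (f : ℝ → ℝ) (a b a' b' : ℝ) (hab : a < b)
    (hf : ContDiff ℝ 1 f) (hsupp : tsupport f ⊆ Icc a b)
    (ha' : a' ≤ a) (hb' : b ≤ b')
    (g : ℝ → ℝ → ℝ)
    (hg : ∀ s t : ℝ, g s t = if t = s then deriv f s else (f s - f t) / (s - t)) :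
    ∀ s ∈ Ioo a b,
      f s * Real.log ((s - a) / (b - s)) - ∫ t in a..b, g s t
        = f s * Real.log ((s - a') / (b' - s)) - ∫ t in a'..b', g s t :=
  stmt_6_general f a b a' b' hf hsupp ha' hb' g hg
end

section
/- Let Ω ⊆ ℂ be open and μ_t : Ω → ℝ. Let α_k : Ω → ℂ (k ≥ 0) be continuously differentiable with ∑_{k≥0} sup|α_k| and ∑_{k≥0} sup|∇α_k| finite on compact subsets of Ω, and suppose that for all z ∈ Ω and θ ∈ ℝ the function a(z,θ) = ∑_{k≥0} α_k(z) e^{ikθ} satisfies (cos θ, sin θ)·∇_z a(z,θ) = μ_t(z) a(z,θ). Let I_m : Ω → ℂ (m ≥ 0) be continuously differentiable with ∑_{m≥0} sup|I_m| and ∑_{m≥0} sup|∇I_m| finite on compacts, satisfying ∂̄I_m + ∂I_{m+2} + μ_t I_{m+1} = 0 on Ω for every m ≥ 0. Define J_m = ∑_{k=0}^{∞} α_k I_{m+k} for m ≥ 0. Then ∂̄J_m + ∂J_{m+2} = 0 on Ω for every m ≥ 0. -/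
open Complex

/-- The Wirtinger derivative `∂ = (∂_{x₁} - i ∂_{x₂})/2` of a (real-)differentiable
function `u : ℂ → ℂ`, where `z = x₁ + i x₂`. -/
noncomputable def wirtingerD (u : ℂ → ℂ) (z : ℂ) : ℂ :=
  (fderiv ℝ u z 1 - Complex.I * fderiv ℝ u z Complex.I) / 2

/-- The conjugate Wirtinger derivative `∂̄ = (∂_{x₁} + i ∂_{x₂})/2`. -/
noncomputable def wirtingerDBar (u : ℂ → ℂ) (z : ℂ) : ℂ :=
  (fderiv ℝ u z 1 + Complex.I * fderiv ℝ u z Complex.I) / 2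

/-!
Differentiating `J_m = ∑ₖ αₖ I_{m+k}` termwise (legitimate thanks to the locally uniform summable
`C¹` bounds) and using the attenuated system for `α_k ∂̄I_{m+k} + α_k ∂I_{m+k+2}` gives
`∂̄J_m + ∂J_{m+2} = ∑ₖ (∂̄αₖ I_{m+k} + ∂αₖ I_{m+k+2} - μ αₖ I_{m+k+1})`.
Collecting terms by `I_{m+n}`, the coefficient is `∂̄αₙ + ∂αₙ₋₂ - μ αₙ₋₁`, which is the `n`-th
Fourier coefficient in `θ` of `e^{iθ} (ξ(θ) · ∇a - μ a) = 0`, hence zero.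
-/

open scoped Real

noncomputable def wirtingerDBarCLM : (ℂ →L[ℝ] ℂ) →L[ℝ] ℂ :=
  (2⁻¹ : ℂ) • (ContinuousLinearMap.apply ℝ ℂ 1 + I • ContinuousLinearMap.apply ℝ ℂ I)

noncomputable def wirtingerDCLM : (ℂ →L[ℝ] ℂ) →L[ℝ] ℂ :=
  (2⁻¹ : ℂ) • (ContinuousLinearMap.apply ℝ ℂ 1 - I • ContinuousLinearMap.apply ℝ ℂ I)

lemma wirtingerDBar_eq_wirtingerDBarCLM (u : ℂ → ℂ) (z : ℂ) :
    wirtingerDBar u z = wirtingerDBarCLM (fderiv ℝ u z) := by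
  simp [wirtingerDBar, wirtingerDBarCLM]; ring

lemma wirtingerD_eq_wirtingerDCLM (u : ℂ → ℂ) (z : ℂ) :
    wirtingerD u z = wirtingerDCLM (fderiv ℝ u z) := by
  simp [wirtingerD, wirtingerDCLM]; ring

lemma norm_wirtingerDBar_le (u : ℂ → ℂ) (z : ℂ) : ‖wirtingerDBar u z‖ ≤ ‖fderiv ℝ u z‖ := by
  have h1 := (fderiv ℝ u z).le_opNorm 1
  have hI := (fderiv ℝ u z).le_opNorm I
  have hsum := norm_add_le (fderiv ℝ u z 1) (I * fderiv ℝ u z I)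
  rw [norm_one, mul_one] at h1
  rw [norm_I, mul_one] at hI
  rw [norm_mul, norm_I, one_mul] at hsum
  rw [wirtingerDBar, norm_div, RCLike.norm_ofNat]
  linarith

lemma norm_wirtingerD_le (u : ℂ → ℂ) (z : ℂ) : ‖wirtingerD u z‖ ≤ ‖fderiv ℝ u z‖ := by
  have h1 := (fderiv ℝ u z).le_opNorm 1
  have hI := (fderiv ℝ u z).le_opNorm I
  have hsub := norm_sub_le (fderiv ℝ u z 1) (I * fderiv ℝ u z I)
  rw [norm_one, mul_one] at h1
  rw [norm_I, mul_one] at hI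
  rw [norm_mul, norm_I, one_mul] at hsub
  rw [wirtingerD, norm_div, RCLike.norm_ofNat]
  linarith

lemma wirtingerDBar_mul {f g : ℂ → ℂ} {z : ℂ} (hf : DifferentiableAt ℝ f z)
    (hg : DifferentiableAt ℝ g z) :
    wirtingerDBar (fun w => f w * g w) z = f z * wirtingerDBar g z + g z * wirtingerDBar f z := by
  simp only [wirtingerDBar, fderiv_fun_mul hf hg, add_apply, smul_apply, smul_eq_mul]
  ring

lemma wirtingerD_mul {f g : ℂ → ℂ} {z : ℂ} (hf : DifferentiableAt ℝ f z)
    (hg : DifferentiableAt ℝ g z) :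
    wirtingerD (fun w => f w * g w) z = f z * wirtingerD g z + g z * wirtingerD f z := by
  simp only [wirtingerD, fderiv_fun_mul hf hg, add_apply, smul_apply, smul_eq_mul]
  ring

lemma wirtingerDBar_mul_const {f : ℂ → ℂ} {z : ℂ} (hf : DifferentiableAt ℝ f z) (c : ℂ) :
    wirtingerDBar (fun w => f w * c) z = c * wirtingerDBar f z := by
  simp only [wirtingerDBar, fderiv_mul_const hf, smul_apply, smul_eq_mul]
  ring

lemma wirtingerD_mul_const {f : ℂ → ℂ} {z : ℂ} (hf : DifferentiableAt ℝ f z) (c : ℂ) :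
    wirtingerD (fun w => f w * c) z = c * wirtingerD f z := by
  simp only [wirtingerD, fderiv_mul_const hf, smul_apply, smul_eq_mul]
  ring

lemma fderiv_apply_cos_add_sin_mul_I (u : ℂ → ℂ) (z : ℂ) (θ : ℝ) :
    fderiv ℝ u z ((Real.cos θ : ℂ) + (Real.sin θ : ℂ) * I) =
      exp (-(θ * I)) * wirtingerDBar u z + exp (θ * I) * wirtingerD u z := by
  set L := fderiv ℝ u z
  have hdir : (Real.cos θ : ℂ) + (Real.sin θ : ℂ) * I = Real.cos θ • (1 : ℂ) + Real.sin θ • I := by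
    simp [Complex.real_smul]
  have hexp : exp (θ * I) = Real.cos θ + Real.sin θ * I := by
    rw [exp_mul_I, ofReal_cos, ofReal_sin]
  have hexp_neg : exp (-(θ * I)) = Real.cos θ - Real.sin θ * I := by
    rw [show -((θ : ℂ) * I) = ((-θ : ℝ) : ℂ) * I by push_cast; ring, exp_mul_I, ← ofReal_cos,
      ← ofReal_sin, Real.cos_neg, Real.sin_neg, ofReal_neg]
    ring
  rw [hdir, map_add, L.map_smul, L.map_smul, wirtingerDBar, wirtingerD, hexp, hexp_neg,
    Complex.real_smul, Complex.real_smul]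
  linear_combination ((Real.sin θ : ℂ) * L I) * I_sq

def SummableC1On (f : ℕ → ℂ → ℂ) (Ω : Set ℂ) : Prop :=
  ∀ K ⊆ Ω, IsCompact K → ∃ C : ℕ → ℝ, Summable C ∧
    ∀ k, ∀ z ∈ K, ‖f k z‖ ≤ C k ∧ ‖fderiv ℝ (f k) z‖ ≤ C k

def BoundedC1On (g : ℕ → ℂ → ℂ) (Ω : Set ℂ) : Prop :=
  ∀ K ⊆ Ω, IsCompact K → ∃ M : ℝ, ∀ k, ∀ z ∈ K, ‖g k z‖ ≤ M ∧ ‖fderiv ℝ (g k) z‖ ≤ M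

lemma boundedC1On_const {c : ℕ → ℂ} {M : ℝ} (hc : ∀ k, ‖c k‖ ≤ M) (Ω : Set ℂ) :
    BoundedC1On (fun k _ => c k) Ω :=
  fun _ _ _ => ⟨M, fun k _ _ => ⟨hc k, by simpa using (norm_nonneg _).trans (hc k)⟩⟩

namespace SummableC1On

variable {f g : ℕ → ℂ → ℂ} {Ω : Set ℂ}

lemma boundedC1On_comp (hf : SummableC1On f Ω) (σ : ℕ → ℕ) :
    BoundedC1On (fun k => f (σ k)) Ω := by
  intro K hK hKc
  obtain ⟨C, hC, hCf⟩ := hf K hK hKc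
  refine ⟨∑' k, C k, fun k z hz => ?_⟩
  have hC_le : C (σ k) ≤ ∑' k, C k :=
    hC.le_tsum (σ k) fun j _ => (norm_nonneg _).trans (hCf j z hz).1
  exact ⟨(hCf _ z hz).1.trans hC_le, (hCf _ z hz).2.trans hC_le⟩

lemma mul (hf : SummableC1On f Ω) (hg : BoundedC1On g Ω) (hΩ : IsOpen Ω)
    (hfd : ∀ k, DifferentiableOn ℝ (f k) Ω) (hgd : ∀ k, DifferentiableOn ℝ (g k) Ω) :
    SummableC1On (fun k w => f k w * g k w) Ω := by
  intro K hK hKc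
  obtain ⟨C, hC, hCf⟩ := hf K hK hKc
  obtain ⟨M, hMg⟩ := hg K hK hKc
  refine ⟨fun k => 2 * M * C k, hC.mul_left _, fun k z hz => ?_⟩
  obtain ⟨hf0, hf1⟩ := hCf k z hz
  obtain ⟨hg0, hg1⟩ := hMg k z hz
  have hC0 : 0 ≤ C k := (norm_nonneg _).trans hf0
  have hM0 : 0 ≤ M := (norm_nonneg _).trans hg0
  have hfg := mul_le_mul hf0 hg0 (norm_nonneg _) hC0
  have hfDg := mul_le_mul hf0 hg1 (norm_nonneg _) hC0
  have hgDf := mul_le_mul hg0 hf1 (norm_nonneg _) hM0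
  have hz' := hΩ.mem_nhds (hK hz)
  rw [norm_mul, fderiv_fun_mul ((hfd k).differentiableAt hz') ((hgd k).differentiableAt hz')]
  refine ⟨by nlinarith, (norm_add_le _ _).trans ?_⟩
  rw [norm_smul, norm_smul]
  linarith

lemma summable_norm_apply (hf : SummableC1On f Ω) {z : ℂ} (hz : z ∈ Ω) :
    Summable (fun k => ‖f k z‖) := by
  obtain ⟨C, hC, hCf⟩ := hf {z} (by simpa) isCompact_singleton
  exact hC.of_nonneg_of_le (fun _ => norm_nonneg _) fun k => (hCf k z rfl).1

lemma summable_norm_fderiv (hf : SummableC1On f Ω) {z : ℂ} (hz : z ∈ Ω) :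
    Summable (fun k => ‖fderiv ℝ (f k) z‖) := by
  obtain ⟨C, hC, hCf⟩ := hf {z} (by simpa) isCompact_singleton
  exact hC.of_nonneg_of_le (fun _ => norm_nonneg _) fun k => (hCf k z rfl).2

lemma summable_norm_wirtingerDBar (hf : SummableC1On f Ω) {z : ℂ} (hz : z ∈ Ω) :
    Summable (fun k => ‖wirtingerDBar (f k) z‖) :=
  (hf.summable_norm_fderiv hz).of_nonneg_of_le (fun _ => norm_nonneg _)
    fun _ => norm_wirtingerDBar_le _ _

lemma summable_norm_wirtingerD (hf : SummableC1On f Ω) {z : ℂ} (hz : z ∈ Ω) :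
    Summable (fun k => ‖wirtingerD (f k) z‖) :=
  (hf.summable_norm_fderiv hz).of_nonneg_of_le (fun _ => norm_nonneg _)
    fun _ => norm_wirtingerD_le _ _

lemma hasSum_fderiv (hf : SummableC1On f Ω) (hΩ : IsOpen Ω)
    (hfd : ∀ k, DifferentiableOn ℝ (f k) Ω) {z : ℂ} (hz : z ∈ Ω) :
    HasSum (fun k => fderiv ℝ (f k) z) (fderiv ℝ (fun w => ∑' k, f k w) z) := by
  obtain ⟨ε, hε, hball⟩ : ∃ ε > 0, Metric.closedBall z ε ⊆ Ω :=
    Metric.nhds_basis_closedBall.mem_iff.1 (hΩ.mem_nhds hz)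
  obtain ⟨C, hC, hCf⟩ := hf _ hball (isCompact_closedBall z ε)
  have hsub : Metric.ball z ε ⊆ Metric.closedBall z ε := Metric.ball_subset_closedBall
  have hz_ball : z ∈ Metric.ball z ε := Metric.mem_ball_self hε
  have hderiv := hasFDerivAt_tsum_of_isPreconnected hC Metric.isOpen_ball
    (convex_ball z ε).isPreconnected
    (fun k w hw => ((hfd k).differentiableAt (hΩ.mem_nhds (hball (hsub hw)))).hasFDerivAt)
    (fun k w hw => (hCf k w (hsub hw)).2) hz_ball
    (hC.of_norm_bounded fun k => (hCf k z (hsub hz_ball)).1) hz_ball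
  rw [hderiv.fderiv]
  exact (hC.of_norm_bounded fun k => (hCf k z (hsub hz_ball)).2).hasSum

lemma hasSum_wirtingerDBar (hf : SummableC1On f Ω) (hΩ : IsOpen Ω)
    (hfd : ∀ k, DifferentiableOn ℝ (f k) Ω) {z : ℂ} (hz : z ∈ Ω) :
    HasSum (fun k => wirtingerDBar (f k) z) (wirtingerDBar (fun w => ∑' k, f k w) z) := by
  simpa only [wirtingerDBar_eq_wirtingerDBarCLM] using
    (hf.hasSum_fderiv hΩ hfd hz).mapL wirtingerDBarCLM

lemma hasSum_wirtingerD (hf : SummableC1On f Ω) (hΩ : IsOpen Ω)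
    (hfd : ∀ k, DifferentiableOn ℝ (f k) Ω) {z : ℂ} (hz : z ∈ Ω) :
    HasSum (fun k => wirtingerD (f k) z) (wirtingerD (fun w => ∑' k, f k w) z) := by
  simpa only [wirtingerD_eq_wirtingerDCLM] using
    (hf.hasSum_fderiv hΩ hfd hz).mapL wirtingerDCLM

end SummableC1On

def shiftCoeff (A B C : ℕ → ℂ) : ℕ → ℂ
  | 0 => A 0
  | 1 => A 1 - C 0
  | n + 2 => A (n + 2) + B n - C (n + 1)

section shiftCoeff

variable {A B C : ℕ → ℂ}

lemma summable_norm_shiftCoeff (hA : Summable (‖A ·‖)) (hB : Summable (‖B ·‖))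
    (hC : Summable (‖C ·‖)) : Summable (‖shiftCoeff A B C ·‖) := by
  rw [← summable_nat_add_iff 2]
  have hbound := (((summable_nat_add_iff 2).2 hA).add hB).add ((summable_nat_add_iff 1).2 hC)
  exact hbound.of_nonneg_of_le (fun _ => norm_nonneg _) fun n =>
    (norm_sub_le _ _).trans (by gcongr; exact norm_add_le _ _)

lemma summable_mul_of_norm_bounded {D X : ℕ → ℂ} {M : ℝ} (hD : Summable (‖D ·‖))
    (hX : ∀ n, ‖X n‖ ≤ M) : Summable (fun n => D n * X n) :=
  (hD.mul_right M).of_norm_bounded fun n =>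
    (norm_mul_le _ _).trans (mul_le_mul_of_nonneg_left (hX n) (norm_nonneg _))

lemma tsum_shiftCoeff_mul (hA : Summable (‖A ·‖)) (hB : Summable (‖B ·‖))
    (hC : Summable (‖C ·‖)) {X : ℕ → ℂ} {M : ℝ} (hX : ∀ n, ‖X n‖ ≤ M) :
    ∑' n, shiftCoeff A B C n * X n =
      ∑' k, (A k * X k + B k * X (k + 2) - C k * X (k + 1)) := by
  have hAX := summable_mul_of_norm_bounded hA hX
  have hBX := summable_mul_of_norm_bounded hB fun n => hX (n + 2)
  have hCX := summable_mul_of_norm_bounded hC fun n => hX (n + 1)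
  have hSX := summable_mul_of_norm_bounded (summable_norm_shiftCoeff hA hB hC) hX
  rw [hSX.tsum_eq_zero_add, ((summable_nat_add_iff 1).2 hSX).tsum_eq_zero_add,
    (hAX.add hBX).tsum_sub hCX, hAX.tsum_add hBX, hAX.tsum_eq_zero_add,
    ((summable_nat_add_iff 1).2 hAX).tsum_eq_zero_add, hCX.tsum_eq_zero_add,
    tsum_congr fun k => show shiftCoeff A B C (k + 2) * X (k + 2) =
      A (k + 2) * X (k + 2) + B k * X (k + 2) - C (k + 1) * X (k + 2) by
        simp only [shiftCoeff]; ring,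
    (((summable_nat_add_iff 2).2 hAX).add hBX).tsum_sub ((summable_nat_add_iff 1).2 hCX),
    ((summable_nat_add_iff 2).2 hAX).tsum_add hBX]
  simp only [shiftCoeff]
  ring

end shiftCoeff

lemma integral_exp_mul_I_mul_exp_neg (n m : ℕ) :
    ∫ θ in (0 : ℝ)..2 * π, exp (n * θ * I) * exp (-(m * θ * I)) =
      if n = m then (2 * π : ℂ) else 0 := by
  have hexp : ∀ θ : ℝ, exp (n * θ * I) * exp (-(m * θ * I)) = exp ((((n : ℤ) - m : ℤ) * I) * θ) :=
    fun θ => by rw [← exp_add]; push_cast; ring_nf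
  simp only [hexp]
  split_ifs with h
  · simp [h]
  · have hnm : (((n : ℤ) - m : ℤ) : ℂ) ≠ 0 := by
      push_cast; exact sub_ne_zero.2 (by exact_mod_cast h)
    rw [integral_exp_mul_complex (mul_ne_zero hnm I_ne_zero)]
    rw [show (((n : ℤ) - m : ℤ) : ℂ) * I * ((2 * π : ℝ) : ℂ) = ((n : ℤ) - m : ℤ) * (2 * π * I) by
      push_cast; ring, exp_int_mul_two_pi_mul_I]
    simp

lemma eq_zero_of_tsum_mul_exp_eq_zero {c : ℕ → ℂ} (hc : Summable (‖c ·‖))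
    (h : ∀ θ : ℝ, ∑' n, c n * exp (n * θ * I) = 0) (m : ℕ) : c m = 0 := by
  have hnorm : ∀ (n : ℕ) (θ : ℝ), ‖c n * exp (n * θ * I) * exp (-(m * θ * I))‖ = ‖c n‖ := by
    intro n θ
    simp [norm_exp]
  have hsummable : ∀ θ : ℝ, Summable (fun n => c n * exp (n * θ * I)) :=
    fun θ => hc.of_norm_bounded fun n => by simp [norm_exp]
  have hsum := intervalIntegral.hasSum_integral_of_dominated_convergence (a := 0) (b := 2 * π)
    (μ := MeasureTheory.volume) (F := fun n θ => c n * exp (n * θ * I) * exp (-(m * θ * I)))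
    (f := fun θ => (∑' n, c n * exp (n * θ * I)) * exp (-(m * θ * I)))
    (fun n _ => ‖c n‖) (fun n => (by fun_prop : Continuous _).aestronglyMeasurable)
    (fun n => .of_forall fun θ _ => (hnorm n θ).le) (.of_forall fun _ _ => hc)
    intervalIntegrable_const
    (.of_forall fun θ _ => (hsummable θ).hasSum.mul_right _)
  have hcoef : ∀ n, ∫ θ in (0 : ℝ)..2 * π, c n * exp (n * θ * I) * exp (-(m * θ * I)) =
      if n = m then c n * (2 * π) else 0 := fun n => by
    rw [← mul_zero (c n), ← mul_ite, ← integral_exp_mul_I_mul_exp_neg,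
      ← intervalIntegral.integral_const_mul]
    simp only [mul_assoc]
  simp only [h, zero_mul, intervalIntegral.integral_zero, hcoef] at hsum
  have h2π : (2 * π : ℂ) ≠ 0 := by simp [Real.pi_ne_zero]
  simpa [h2π] using (hasSum_single m fun n hn => if_neg hn).unique hsum

/-- The Fourier modes `∂̄αₙ + ∂αₙ₋₂ = μ αₙ₋₁` of `ξ(θ) · ∇a = μ a`: since
`ξ(θ) · ∇ = e^{-iθ} ∂̄ + e^{iθ} ∂`, the equation times `e^{iθ}` reads
`∑ₙ (∂̄αₙ + ∂αₙ₋₂ - μ αₙ₋₁) e^{inθ} = 0`. -/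
lemma shiftCoeff_wirtinger_eq_zero {Ω : Set ℂ} {α : ℕ → ℂ → ℂ} (hΩ : IsOpen Ω)
    (hαd : ∀ k, DifferentiableOn ℝ (α k) Ω) (hα : SummableC1On α Ω) {z : ℂ} (hz : z ∈ Ω) {μ : ℂ}
    (ha : ∀ θ : ℝ,
      fderiv ℝ (fun w => ∑' k : ℕ, α k w * exp (k * θ * I)) z (Real.cos θ + Real.sin θ * I) =
        μ * ∑' k : ℕ, α k z * exp (k * θ * I)) (n : ℕ) :
    shiftCoeff (fun k => wirtingerDBar (α k) z) (fun k => wirtingerD (α k) z)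
      (fun k => μ * α k z) n = 0 := by
  have hA := hα.summable_norm_wirtingerDBar hz
  have hB := hα.summable_norm_wirtingerD hz
  have hC : Summable fun k => ‖μ * α k z‖ := by
    simpa only [norm_mul] using (hα.summable_norm_apply hz).mul_left ‖μ‖
  refine eq_zero_of_tsum_mul_exp_eq_zero (summable_norm_shiftCoeff hA hB hC) (fun θ => ?_) n
  have hnorm : ∀ k : ℕ, ‖exp (k * θ * I)‖ = 1 := fun k => by simp [norm_exp]
  have hαz : ∀ k, DifferentiableAt ℝ (α k) z := fun k => (hαd k).differentiableAt (hΩ.mem_nhds hz)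
  have hfam := hα.mul (boundedC1On_const (fun k => (hnorm k).le) Ω) hΩ hαd
    fun _ => differentiableOn_const _
  have hfamd : ∀ k, DifferentiableOn ℝ (fun w => α k w * exp (k * θ * I)) Ω :=
    fun k => (hαd k).mul_const _
  have hDBar := hfam.hasSum_wirtingerDBar hΩ hfamd hz
  have hD := hfam.hasSum_wirtingerD hΩ hfamd hz
  simp only [wirtingerDBar_mul_const (hαz _), wirtingerD_mul_const (hαz _)] at hDBar hD
  have heq := ha θ
  rw [fderiv_apply_cos_add_sin_mul_I] at heq
  have hsum := (((hDBar.mul_left (exp (-(θ * I)))).add (hD.mul_left (exp (θ * I)))).sub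
    ((hfam.summable_norm_apply hz).of_norm.hasSum.mul_left μ)).mul_left (exp (θ * I))
  rw [heq, sub_self, mul_zero] at hsum
  rw [tsum_shiftCoeff_mul hA hB hC fun k => (hnorm k).le, ← hsum.tsum_eq]
  refine tsum_congr fun k => ?_
  have hexp_one : exp ((k + 1 : ℕ) * θ * I) = exp (θ * I) * exp (k * θ * I) := by
    rw [← exp_add]; push_cast; ring_nf
  have hexp_two : exp ((k + 2 : ℕ) * θ * I) = exp (θ * I) * (exp (θ * I) * exp (k * θ * I)) := by
    rw [← exp_add, ← exp_add]; push_cast; ring_nf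
  have hexp_neg : exp (θ * I) * exp (-(θ * I)) = 1 := by rw [← exp_add, add_neg_cancel, exp_zero]
  rw [hexp_one, hexp_two]
  linear_combination -(exp (k * θ * I) * wirtingerDBar (α k) z) * hexp_neg

lemma wirtingerDBar_add_wirtingerD_convolution {Ω : Set ℂ} {α u : ℕ → ℂ → ℂ} (hΩ : IsOpen Ω)
    (hαd : ∀ k, DifferentiableOn ℝ (α k) Ω) (hα : SummableC1On α Ω)
    (hud : ∀ m, DifferentiableOn ℝ (u m) Ω) (hu : SummableC1On u Ω) {z : ℂ} (hz : z ∈ Ω) {μ : ℂ}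
    (hsys : ∀ m, wirtingerDBar (u m) z + wirtingerD (u (m + 2)) z + μ * u (m + 1) z = 0)
    (m : ℕ) :
    wirtingerDBar (fun w => ∑' k, α k w * u (m + k) w) z +
        wirtingerD (fun w => ∑' k, α k w * u (m + 2 + k) w) z =
      ∑' n, shiftCoeff (fun k => wirtingerDBar (α k) z) (fun k => wirtingerD (α k) z)
        (fun k => μ * α k z) n * u (m + n) z := by
  have hC : Summable fun k => ‖μ * α k z‖ := by
    simpa only [norm_mul] using (hα.summable_norm_apply hz).mul_left ‖μ‖
  obtain ⟨M, hM⟩ := hu.boundedC1On_comp (m + ·) {z} (by simpa) isCompact_singleton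
  have hfam : ∀ j, SummableC1On (fun k w => α k w * u (j + k) w) Ω :=
    fun j => hα.mul (hu.boundedC1On_comp (j + ·)) hΩ hαd fun _ => hud _
  have hfamd : ∀ j k, DifferentiableOn ℝ (fun w => α k w * u (j + k) w) Ω :=
    fun j k => (hαd k).mul (hud _)
  have hsum := ((hfam m).hasSum_wirtingerDBar hΩ (hfamd m) hz).add
    ((hfam (m + 2)).hasSum_wirtingerD hΩ (hfamd (m + 2)) hz)
  rw [tsum_shiftCoeff_mul (hα.summable_norm_wirtingerDBar hz) (hα.summable_norm_wirtingerD hz) hC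
    fun n => (hM n z rfl).1, ← hsum.tsum_eq]
  refine tsum_congr fun k => ?_
  have hdiff := fun {v : ℂ → ℂ} (hv : DifferentiableOn ℝ v Ω) =>
    hv.differentiableAt (hΩ.mem_nhds hz)
  dsimp only
  rw [wirtingerDBar_mul (hdiff (hαd k)) (hdiff (hud _)),
    wirtingerD_mul (hdiff (hαd k)) (hdiff (hud _)), show m + 2 + k = m + k + 2 by omega,
    show m + (k + 2) = m + k + 2 by omega, show m + (k + 1) = m + k + 1 by omega]
  linear_combination α k z * hsys (m + k)

/-- If `a(z,θ) = ∑_{k≥0} α_k(z) e^{ikθ}` satisfies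
`ξ(θ)·∇_z a = μ_t a` on an open set `Ω ⊆ ℂ`, and `(I_m)_{m≥0}` solves the attenuated
system `∂̄I_m + ∂I_{m+2} + μ_t I_{m+1} = 0` on `Ω`, then the convolution
`J_m = ∑_{k≥0} α_k I_{m+k}` solves the attenuation-free system
`∂̄J_m + ∂J_{m+2} = 0` on `Ω`. -/
theorem stmt_14 (Ω : Set ℂ) (hΩ : IsOpen Ω) (μt : ℂ → ℝ)
    (α : ℕ → ℂ → ℂ) (I : ℕ → ℂ → ℂ)
    (hαdiff : ∀ k : ℕ, ContDiffOn ℝ 1 (α k) Ω)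
    (hαsum : ∀ Kc : Set ℂ, Kc ⊆ Ω → IsCompact Kc →
      ∃ C : ℕ → ℝ, Summable C ∧ ∀ k : ℕ, ∀ z ∈ Kc,
        ‖α k z‖ ≤ C k ∧ ‖fderiv ℝ (α k) z‖ ≤ C k)
    (ha : ∀ z ∈ Ω, ∀ θ : ℝ,
      fderiv ℝ (fun w : ℂ => ∑' k : ℕ, α k w * Complex.exp ((k : ℂ) * (θ : ℂ) * Complex.I))
          z ((Real.cos θ : ℂ) + (Real.sin θ : ℂ) * Complex.I)
        = (μt z : ℂ) * ∑' k : ℕ, α k z * Complex.exp ((k : ℂ) * (θ : ℂ) * Complex.I))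
    (hIdiff : ∀ m : ℕ, ContDiffOn ℝ 1 (I m) Ω)
    (hIsum : ∀ Kc : Set ℂ, Kc ⊆ Ω → IsCompact Kc →
      ∃ C : ℕ → ℝ, Summable C ∧ ∀ m : ℕ, ∀ z ∈ Kc,
        ‖I m z‖ ≤ C m ∧ ‖fderiv ℝ (I m) z‖ ≤ C m)
    (hIsys : ∀ m : ℕ, ∀ z ∈ Ω,
      wirtingerDBar (I m) z + wirtingerD (I (m + 2)) z + (μt z : ℂ) * I (m + 1) z = 0)
    (J : ℕ → ℂ → ℂ)
    (hJ : ∀ m : ℕ, ∀ z : ℂ, J m z = ∑' k : ℕ, α k z * I (m + k) z) :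
    ∀ m : ℕ, ∀ z ∈ Ω,
      wirtingerDBar (J m) z + wirtingerD (J (m + 2)) z = 0 := by
  intro m z hz
  have hαd := fun k => (hαdiff k).differentiableOn one_ne_zero
  have hId := fun m => (hIdiff m).differentiableOn one_ne_zero
  rw [show J m = _ from funext (hJ m), show J (m + 2) = _ from funext (hJ (m + 2)),
    wirtingerDBar_add_wirtingerD_convolution hΩ hαd hαsum hId hIsum hz (hIsys · z hz) m]
  simp [shiftCoeff_wirtinger_eq_zero hΩ hαd hαsum hz (ha z hz)]
end

section
/- Let Ω ⊆ ℂ be open and μ_t : Ω → ℝ. Let β_k : Ω → ℂ (k ≥ 0) be continuously differentiable with ∑_{k≥0} sup|β_k| and ∑_{k≥0} sup|∇β_k| finite on compact subsets of Ω, and suppose that for all z ∈ Ω and θ ∈ ℝ the function b(z,θ) = ∑_{k≥0} β_k(z) e^{ikθ} satisfies (cos θ, sin θ)·∇_z b(z,θ) = −μ_t(z) b(z,θ). Let J_m : Ω → ℂ (m ≥ 0) be continuously differentiable with ∑_{m≥0} sup|J_m| and ∑_{m≥0} sup|∇J_m| finite on compacts, satisfying ∂̄J_m + ∂J_{m+2}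 = 0 on Ω for every m ≥ 0. Define I_m = ∑_{k=0}^{∞} β_k J_{m+k} for m ≥ 0. Then ∂̄I_m + ∂I_{m+2} + μ_t I_{m+1} = 0 on Ω for every m ≥ 0. -/
/-!
Since `ξ(θ)·∇ = e^{iθ} ∂ + e^{-iθ} ∂̄`, comparing the Fourier modes in `θ` of `ξ·∇b = -μ_t b` gives
`∂̄β₀ = 0`, `∂̄β₁ + μ_t β₀ = 0` and `∂̄β_{k+2} + ∂β_k + μ_t β_{k+1} = 0`. The summable `C¹` bounds
allow differentiating `I_m = ∑ β_k J_{m+k}` term by term. In `∂̄I_m + ∂I_{m+2} + μ_t I_{m+1}` the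
terms `β_k (∂̄J_{m+k} + ∂J_{m+k+2})` vanish by the free system, and regrouping the rest by
`J_{m+j}` leaves exactly the mode relations as coefficients.
-/

open Complex

open Metric

/-- `wirtingerCLM I` is `∂̄` and `wirtingerCLM (-I)` is `∂`, read off the real differential. -/
noncomputable def wirtingerCLM (c : ℂ) : (ℂ →L[ℝ] ℂ) →L[ℝ] ℂ :=
  (2⁻¹ : ℂ) • (ContinuousLinearMap.apply ℝ ℂ (1 : ℂ) + c • ContinuousLinearMap.apply ℝ ℂ I)

lemma wirtingerCLM_apply (c : ℂ) (L : ℂ →L[ℝ] ℂ) : wirtingerCLM c L = (L 1 + c * L I) / 2 := by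
  simp only [wirtingerCLM, smul_add, add_apply,
    smul_apply, ContinuousLinearMap.apply_apply, smul_eq_mul]
  ring

lemma wirtingerDBar_eq_wirtingerCLM (u : ℂ → ℂ) (z : ℂ) :
    wirtingerDBar u z = wirtingerCLM I (fderiv ℝ u z) := by
  rw [wirtingerDBar, wirtingerCLM_apply]

lemma wirtingerD_eq_wirtingerCLM (u : ℂ → ℂ) (z : ℂ) :
    wirtingerD u z = wirtingerCLM (-I) (fderiv ℝ u z) := by
  rw [wirtingerD, wirtingerCLM_apply]
  ring

lemma wirtingerCLM_smul (c a : ℂ) (L : ℂ →L[ℝ] ℂ) :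
    wirtingerCLM c (a • L) = a * wirtingerCLM c L := by
  simp only [wirtingerCLM_apply, smul_apply, smul_eq_mul]
  ring

lemma norm_wirtingerCLM_apply_le {c : ℂ} (hc : ‖c‖ = 1) (L : ℂ →L[ℝ] ℂ) :
    ‖wirtingerCLM c L‖ ≤ ‖L‖ := by
  have h1 : ‖L 1‖ ≤ ‖L‖ := by simpa using L.le_opNorm 1
  have hI : ‖L I‖ ≤ ‖L‖ := by simpa using L.le_opNorm I
  rw [wirtingerCLM_apply, norm_div, RCLike.norm_ofNat]
  calc ‖L 1 + c * L I‖ / 2 ≤ (‖L 1‖ + ‖c‖ * ‖L I‖) / 2 := by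
        gcongr
        exact (norm_add_le _ _).trans_eq (by rw [norm_mul])
    _ ≤ ‖L‖ := by rw [hc]; linarith

/-- The identity `ξ(θ)·∇ = e^{iθ} ∂ + e^{-iθ} ∂̄` at the level of a real-linear map. -/
lemma apply_cos_add_sin_mul_I (L : ℂ →L[ℝ] ℂ) (θ : ℝ) :
    L (Real.cos θ + Real.sin θ * I)
      = exp (θ * I) * wirtingerCLM (-I) L + exp (-(θ * I)) * wirtingerCLM I L := by
  have hξ : (Real.cos θ + Real.sin θ * I : ℂ) = Real.cos θ • (1 : ℂ) + Real.sin θ • I := by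
    simp [Complex.real_smul]
  have hneg : exp (-(θ * I)) = Real.cos θ - Real.sin θ * I := by
    rw [← neg_mul, ← ofReal_neg, exp_mul_I, ← ofReal_cos, ← ofReal_sin, Real.cos_neg,
      Real.sin_neg, ofReal_neg, neg_mul, ← sub_eq_add_neg]
  rw [hξ, map_add, map_smul, map_smul, exp_mul_I, hneg, wirtingerCLM_apply, wirtingerCLM_apply,
    ← ofReal_cos, ← ofReal_sin, Complex.real_smul, Complex.real_smul]
  linear_combination (Real.sin θ * L I : ℂ) * I_sq

section C1Bounds

variable {E F : Type*} [NormedAddCommGroup E] [NormedSpace ℝ E]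
  [NormedAddCommGroup F] [NormedSpace ℝ F]

def C1BoundedOn (f : E → F) (s : Set E) (c : ℝ) : Prop :=
  ∀ y ∈ s, DifferentiableAt ℝ f y ∧ ‖f y‖ ≤ c ∧ ‖fderiv ℝ f y‖ ≤ c

lemma C1BoundedOn.mono {f : E → F} {s t : Set E} {c d : ℝ} (hf : C1BoundedOn f s c)
    (hts : t ⊆ s) (hcd : c ≤ d) : C1BoundedOn f t d := fun y hy =>
  have h := hf y (hts hy)
  ⟨h.1, h.2.1.trans hcd, h.2.2.trans hcd⟩

lemma C1BoundedOn.nonneg {f : E → F} {s : Set E} {c : ℝ} (hf : C1BoundedOn f s c)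
    (hs : s.Nonempty) : 0 ≤ c :=
  (norm_nonneg _).trans (hf hs.some hs.some_mem).2.1

lemma exists_summable_c1BoundedOn_ball [ProperSpace E] {f : ℕ → E → F} {Ω : Set E} {x : E}
    {r : ℝ} (hΩ : IsOpen Ω) (hf : ∀ k, ContDiffOn ℝ 1 (f k) Ω)
    (hsum : ∀ K ⊆ Ω, IsCompact K → ∃ C : ℕ → ℝ, Summable C ∧
      ∀ k, ∀ y ∈ K, ‖f k y‖ ≤ C k ∧ ‖fderiv ℝ (f k) y‖ ≤ C k)
    (hr : closedBall x r ⊆ Ω) :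
    ∃ C : ℕ → ℝ, Summable C ∧ ∀ k, C1BoundedOn (f k) (ball x r) (C k) := by
  obtain ⟨C, hC, hfC⟩ := hsum _ hr (isCompact_closedBall x r)
  refine ⟨C, hC, fun k y hy => ⟨?_, hfC k y (ball_subset_closedBall hy)⟩⟩
  exact ((hf k).differentiableOn one_ne_zero).differentiableAt
    (hΩ.mem_nhds (hr (ball_subset_closedBall hy)))

lemma c1BoundedOn_const {a : F} {s : Set E} {c : ℝ} (ha : ‖a‖ ≤ c) :
    C1BoundedOn (fun _ : E => a) s c := fun _ _ =>
  ⟨differentiableAt_const a, ha, by simpa using (norm_nonneg a).trans ha⟩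

lemma C1BoundedOn.mul {f g : E → ℂ} {s : Set E}
    {a b : ℝ} (hf : C1BoundedOn f s a) (hg : C1BoundedOn g s b) :
    C1BoundedOn (fun y => f y * g y) s (2 * (a * b)) := by
  intro y hy
  obtain ⟨hfd, hfy, hf'y⟩ := hf y hy
  obtain ⟨hgd, hgy, hg'y⟩ := hg y hy
  have ha : 0 ≤ a := (norm_nonneg _).trans hfy
  have hb : 0 ≤ b := (norm_nonneg _).trans hgy
  have hval : ‖f y * g y‖ ≤ a * b :=
    (norm_mul_le _ _).trans (mul_le_mul hfy hgy (norm_nonneg _) ha)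
  refine ⟨hfd.mul hgd, hval.trans (by linarith [mul_nonneg ha hb]), ?_⟩
  rw [show (fun y => f y * g y) = f * g from rfl, fderiv_mul hfd hgd]
  calc ‖f y • fderiv ℝ g y + g y • fderiv ℝ f y‖
      ≤ ‖f y‖ * ‖fderiv ℝ g y‖ + ‖g y‖ * ‖fderiv ℝ f y‖ := by
        rw [← norm_smul, ← norm_smul]
        exact norm_add_le _ _
    _ ≤ a * b + b * a := by gcongr
    _ = 2 * (a * b) := by ring

lemma hasFDerivAt_tsum_of_c1BoundedOn [CompleteSpace F] {f : ℕ → E → F} {C : ℕ → ℝ}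
    {x : E} {r : ℝ} (hC : Summable C) (hr : 0 < r)
    (hf : ∀ k, C1BoundedOn (f k) (ball x r) (C k)) :
    HasFDerivAt (fun y => ∑' k, f k y) (∑' k, fderiv ℝ (f k) x) x :=
  hasFDerivAt_tsum_of_isPreconnected hC isOpen_ball (convex_ball x r).isPreconnected
    (fun k y hy => (hf k y hy).1.hasFDerivAt) (fun k y hy => (hf k y hy).2.2)
    (mem_ball_self hr) (.of_norm_bounded hC fun k => (hf k x (mem_ball_self hr)).2.1)
    (mem_ball_self hr)

lemma map_fderiv_tsum_mul {G : Type*} [NormedAddCommGroup G] [NormedSpace ℝ G]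
    (Φ : (E →L[ℝ] ℂ) →L[ℝ] G) {f g : ℕ → E → ℂ} {C : ℕ → ℝ} {T : ℝ} {x : E} {r : ℝ}
    (hC : Summable C) (hr : 0 < r) (hf : ∀ k, C1BoundedOn (f k) (ball x r) (C k))
    (hg : ∀ k, C1BoundedOn (g k) (ball x r) T) :
    Φ (fderiv ℝ (fun y => ∑' k, f k y * g k y) x)
      = ∑' k, Φ (f k x • fderiv ℝ (g k) x + g k x • fderiv ℝ (f k) x) := by
  have hfg : ∀ k, C1BoundedOn (fun y => f k y * g k y) (ball x r) (2 * (C k * T)) :=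
    fun k => (hf k).mul (hg k)
  have hC' : Summable fun k => 2 * (C k * T) := (hC.mul_right T).mul_left 2
  have hx := mem_ball_self hr (x := x)
  rw [(hasFDerivAt_tsum_of_c1BoundedOn hC' hr hfg).fderiv,
    Φ.map_tsum (.of_norm_bounded hC' fun k => (hfg k x hx).2.2)]
  exact tsum_congr fun k => congrArg Φ (fderiv_mul (hf k x hx).1 (hg k x hx).1)

end C1Bounds

lemma C1BoundedOn.norm_wirtingerCLM_le {u : ℂ → ℂ} {s : Set ℂ} {C : ℝ} {y c : ℂ}
    (hu : C1BoundedOn u s C) (hy : y ∈ s) (hc : ‖c‖ = 1) :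
    ‖wirtingerCLM c (fderiv ℝ u y)‖ ≤ C :=
  (norm_wirtingerCLM_apply_le hc _).trans (hu y hy).2.2

lemma wirtingerCLM_fderiv_tsum_mul (c : ℂ) {f g : ℕ → ℂ → ℂ} {C : ℕ → ℝ} {T : ℝ} {z : ℂ}
    {r : ℝ} (hC : Summable C) (hr : 0 < r) (hf : ∀ k, C1BoundedOn (f k) (ball z r) (C k))
    (hg : ∀ k, C1BoundedOn (g k) (ball z r) T) :
    wirtingerCLM c (fderiv ℝ (fun w => ∑' k, f k w * g k w) z)
      = ∑' k, (f k z * wirtingerCLM c (fderiv ℝ (g k) z)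
        + g k z * wirtingerCLM c (fderiv ℝ (f k) z)) := by
  rw [map_fderiv_tsum_mul _ hC hr hf hg]
  simp only [map_add, wirtingerCLM_smul]

lemma integral_exp_int_mul_I (n : ℤ) :
    ∫ θ in (0 : ℝ)..2 * Real.pi, exp (n * θ * I) = if n = 0 then 2 * Real.pi else 0 := by
  split_ifs with hn
  · simp [hn]
  have hc : (n : ℂ) * I ≠ 0 := mul_ne_zero (by exact_mod_cast hn) I_ne_zero
  have hperiod : exp (n * I * (2 * Real.pi)) = 1 := by
    rw [← exp_int_mul_two_pi_mul_I n]
    ring_nf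
  simp_rw [mul_right_comm _ _ I]
  rw [integral_exp_mul_complex hc]
  push_cast
  rw [hperiod]
  simp

lemma norm_exp_mul_mul_I (x y : ℝ) : ‖exp (x * y * I)‖ = 1 := by
  rw [← ofReal_mul, norm_exp_ofReal_mul_I]

lemma summable_mul_exp_mul_I {f : ℕ → ℂ} (hf : Summable f) (θ : ℝ) :
    Summable fun k => f k * exp (k * θ * I) :=
  .of_norm_bounded hf.norm fun k => by
    rw [norm_mul, ← ofReal_natCast, norm_exp_mul_mul_I, mul_one]

open MeasureTheory in
lemma eq_zero_of_forall_tsum_mul_exp_eq_zero {a : ℕ → ℂ} (ha : Summable a)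
    (h : ∀ θ : ℝ, ∑' k, a k * exp (k * θ * I) = 0) (n : ℕ) : a n = 0 := by
  set F : ℕ → ℝ → ℂ := fun k θ => a k * exp (k * θ * I) * exp (-(n * θ * I))
  have hF : ∀ k θ, F k θ = a k * exp (((k - n : ℤ) : ℂ) * θ * I) := by
    intro k θ
    simp only [F, mul_assoc, ← exp_add]
    push_cast
    ring_nf
  have hsum : HasSum (fun k => ∫ θ in (0 : ℝ)..2 * Real.pi, F k θ)
      (∫ _ in (0 : ℝ)..2 * Real.pi, (0 : ℂ)) :=
    intervalIntegral.hasSum_integral_of_dominated_convergence (fun k _ => ‖a k‖)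
      (fun k => (by fun_prop : Continuous (F k)).aestronglyMeasurable)
      (fun k => ae_of_all _ fun θ _ => by
        rw [hF, norm_mul, ← ofReal_intCast, norm_exp_mul_mul_I, mul_one])
      (ae_of_all _ fun _ _ => ha.norm) intervalIntegrable_const
      (ae_of_all _ fun θ _ => by
        simpa [h θ] using (summable_mul_exp_mul_I ha θ).hasSum.mul_right (exp (-(n * θ * I))))
  simp_rw [hF, intervalIntegral.integral_const_mul, integral_exp_int_mul_I, sub_eq_zero,
    Nat.cast_inj, intervalIntegral.integral_zero] at hsum
  have h2 := hsum.unique (hasSum_single n fun k hk => by simp [hk])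
  simpa [Real.pi_ne_zero] using h2.symm

def shiftSeq (f : ℕ → ℂ) : ℕ → ℂ
  | 0 => 0
  | n + 1 => f n

lemma Summable.shiftSeq {f : ℕ → ℂ} (hf : Summable f) : Summable (shiftSeq f) :=
  (summable_nat_add_iff 1).mp hf

lemma hasSum_shiftSeq_mul {f g : ℕ → ℂ} {s : ℂ} (h : HasSum (fun n => f n * g (n + 1)) s) :
    HasSum (fun n => shiftSeq f n * g n) s :=
  (hasSum_nat_add_iff' 1).mp (by simpa [shiftSeq] using h)

lemma fourier_mode_relations {p q r : ℕ → ℂ} (hp : Summable p) (hq : Summable q) (hr : Summable r)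
    (h : ∀ θ : ℝ, exp (θ * I) * ∑' k, p k * exp (k * θ * I)
      + exp (-(θ * I)) * ∑' k, q k * exp (k * θ * I) + ∑' k, r k * exp (k * θ * I) = 0) :
    q 0 = 0 ∧ q 1 + r 0 = 0 ∧ ∀ k, q (k + 2) + p k + r (k + 1) = 0 := by
  set a : ℕ → ℂ := fun n => q n + shiftSeq r n + shiftSeq (shiftSeq p) n
  suffices ha : ∀ n, a n = 0 from ⟨by simpa [a, shiftSeq] using ha 0,
    by simpa [a, shiftSeq] using ha 1, fun k => by simpa [a, shiftSeq, add_right_comm] using ha (k + 2)⟩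
  refine eq_zero_of_forall_tsum_mul_exp_eq_zero ((hq.add hr.shiftSeq).add hp.shiftSeq.shiftSeq)
    fun θ => ?_
  set w := exp (θ * I)
  have he : ∀ n : ℕ, exp (((n + 1 : ℕ) : ℂ) * θ * I) = w * exp (n * θ * I) := fun n => by
    rw [← exp_add]
    push_cast
    ring_nf
  have hww : w * exp (-(θ * I)) = 1 := by rw [← exp_add, add_neg_cancel, exp_zero]
  obtain ⟨P, hP⟩ := summable_mul_exp_mul_I hp θ
  obtain ⟨Q, hQ⟩ := summable_mul_exp_mul_I hq θ
  obtain ⟨R, hR⟩ := summable_mul_exp_mul_I hr θ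
  have hPQR : w * P + exp (-(θ * I)) * Q + R = 0 := by
    simpa only [hP.tsum_eq, hQ.tsum_eq, hR.tsum_eq] using h θ
  have hR' : HasSum (fun n => shiftSeq r n * exp (n * θ * I)) (w * R) :=
    hasSum_shiftSeq_mul ((hR.mul_left w).congr_fun fun n => by rw [he]; ring)
  have hP' : HasSum (fun n => shiftSeq (shiftSeq p) n * exp (n * θ * I)) (w * (w * P)) :=
    hasSum_shiftSeq_mul (hasSum_shiftSeq_mul
      (((hP.mul_left w).mul_left w).congr_fun fun n => by rw [he, he]; ring))
  calc ∑' n, a n * exp (n * θ * I)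
      = ∑' n, (q n * exp (n * θ * I) + shiftSeq r n * exp (n * θ * I)
          + shiftSeq (shiftSeq p) n * exp (n * θ * I)) := tsum_congr fun n => by ring
    _ = Q + w * R + w * (w * P) := ((hQ.add hR').add hP').tsum_eq
    _ = 0 := by linear_combination w * hPQR - Q * hww

lemma wirtinger_relations_of_transport {β : ℕ → ℂ → ℂ} {μ z : ℂ} {C : ℕ → ℝ} {r : ℝ}
    (hC : Summable C) (hr : 0 < r) (hβ : ∀ k, C1BoundedOn (β k) (ball z r) (C k))
    (hb : ∀ θ : ℝ, fderiv ℝ (fun w => ∑' k : ℕ, β k w * exp (k * θ * I)) z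
        (Real.cos θ + Real.sin θ * I) = -μ * ∑' k : ℕ, β k z * exp (k * θ * I)) :
    wirtingerDBar (β 0) z = 0 ∧ wirtingerDBar (β 1) z + μ * β 0 z = 0 ∧
      ∀ k, wirtingerDBar (β (k + 2)) z + wirtingerD (β k) z + μ * β (k + 1) z = 0 := by
  have hz := mem_ball_self hr (x := z)
  have hW : ∀ c : ℂ, ‖c‖ = 1 → Summable fun k => wirtingerCLM c (fderiv ℝ (β k) z) := fun c hc =>
    .of_norm_bounded hC fun k => (hβ k).norm_wirtingerCLM_le hz hc
  have hβz : Summable fun k => β k z := .of_norm_bounded hC fun k => (hβ k z hz).2.1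
  simp only [wirtingerDBar_eq_wirtingerCLM, wirtingerD_eq_wirtingerCLM]
  refine fourier_mode_relations (hW (-I) (by simp)) (hW I (by simp)) (hβz.mul_left μ) fun θ => ?_
  obtain ⟨P, hP⟩ := summable_mul_exp_mul_I (hW (-I) (by simp)) θ
  obtain ⟨Q, hQ⟩ := summable_mul_exp_mul_I (hW I (by simp)) θ
  have hexp : ∀ k : ℕ, C1BoundedOn (fun _ : ℂ => exp (k * θ * I)) (ball z r) 1 := fun k =>
    c1BoundedOn_const (by rw [← ofReal_natCast, norm_exp_mul_mul_I])
  have hderiv := map_fderiv_tsum_mul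
    (ContinuousLinearMap.apply ℝ ℂ (Real.cos θ + Real.sin θ * I : ℂ)) hC hr hβ hexp
  simp only [ContinuousLinearMap.apply_apply, fderiv_const_apply, smul_zero, zero_add] at hderiv
  simp only [hb θ, smul_apply, smul_eq_mul, apply_cos_add_sin_mul_I] at hderiv
  have hsplit : ∑' k : ℕ, exp (k * θ * I) * (exp (θ * I) * wirtingerCLM (-I) (fderiv ℝ (β k) z)
      + exp (-(θ * I)) * wirtingerCLM I (fderiv ℝ (β k) z))
      = exp (θ * I) * P + exp (-(θ * I)) * Q :=
    (((hP.mul_left _).add (hQ.mul_left _)).congr_fun fun k => by ring).tsum_eq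
  rw [hsplit] at hderiv
  rw [hP.tsum_eq, hQ.tsum_eq, ← hderiv]
  simp only [mul_assoc]
  rw [tsum_mul_left]
  ring

lemma summable_mul_of_norm_le {ι : Type*} {u v : ι → ℂ} {C : ι → ℝ} {T : ℝ} (hC : Summable C)
    (hu : ∀ i, ‖u i‖ ≤ C i) (hv : ∀ i, ‖v i‖ ≤ T) : Summable fun i => u i * v i :=
  .of_norm_bounded (hC.mul_right T) fun i => (norm_mul_le _ _).trans
    (mul_le_mul (hu i) (hv i) (norm_nonneg _) ((norm_nonneg _).trans (hu i)))

/-- Read `a, p, q` as `β, ∂β, ∂̄β` and `x, px, qx` as `J, ∂J, ∂̄J` shifted by `m`. -/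
lemma tsum_convolution_relation {a p q x px qx : ℕ → ℂ} {μ : ℂ} {C : ℕ → ℝ} {T : ℝ}
    (hC : Summable C) (ha : ∀ k, ‖a k‖ ≤ C k) (hp : ∀ k, ‖p k‖ ≤ C k) (hq : ∀ k, ‖q k‖ ≤ C k)
    (hx : ∀ j, ‖x j‖ ≤ T) (hpx : ∀ j, ‖px j‖ ≤ T) (hqx : ∀ j, ‖qx j‖ ≤ T)
    (hq0 : q 0 = 0) (hq1 : q 1 + μ * a 0 = 0) (hrec : ∀ k, q (k + 2) + p k + μ * a (k + 1) = 0)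
    (hsys : ∀ j, qx j + px (j + 2) = 0) :
    ∑' k, (a k * qx k + x k * q k) + ∑' k, (a k * px (k + 2) + x (k + 2) * p k)
      + μ * ∑' k, a k * x (k + 1) = 0 := by
  obtain ⟨A₁, hA₁⟩ := summable_mul_of_norm_le hC ha hqx
  obtain ⟨A₂, hA₂⟩ := (summable_mul_of_norm_le hC hq hx).congr fun k => mul_comm (q k) (x k)
  obtain ⟨A₃, hA₃⟩ := summable_mul_of_norm_le hC ha fun k => hpx (k + 2)
  obtain ⟨A₄, hA₄⟩ := (summable_mul_of_norm_le hC hp fun k => hx (k + 2)).congr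
    fun k => mul_comm (p k) (x (k + 2))
  obtain ⟨A₅, hA₅⟩ := summable_mul_of_norm_le hC ha fun k => hx (k + 1)
  rw [(hA₁.add hA₂).tsum_eq, (hA₃.add hA₄).tsum_eq, hA₅.tsum_eq]
  have h₁₃ : A₁ + A₃ = 0 := (hA₁.add hA₃).unique
    (hasSum_zero.congr_fun fun k => by linear_combination a k * hsys k)
  have hA₂' : HasSum (fun k => x (k + 2) * q (k + 2)) (A₂ - (x 0 * q 0 + x 1 * q 1)) := by
    simpa [Finset.sum_range_succ] using (hasSum_nat_add_iff' 2).mpr hA₂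
  have hA₅' : HasSum (fun k => a (k + 1) * x (k + 2)) (A₅ - a 0 * x 1) := by
    simpa using (hasSum_nat_add_iff' 1).mpr hA₅
  have h₂₄₅ : A₂ - (x 0 * q 0 + x 1 * q 1) + A₄ + μ * (A₅ - a 0 * x 1) = 0 :=
    ((hA₂'.add hA₄).add (hA₅'.mul_left μ)).unique
      (hasSum_zero.congr_fun fun k => by linear_combination x (k + 2) * hrec k)
  linear_combination h₁₃ + h₂₄₅ + x 0 * hq0 + x 1 * hq1

/-- If `b(z,θ) = ∑_{k≥0} β_k(z) e^{ikθ}` satisfies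
`ξ(θ)·∇_z b = -μ_t b` on an open set `Ω ⊆ ℂ`, and `(J_m)_{m≥0}` solves the
attenuation-free system `∂̄J_m + ∂J_{m+2} = 0` on `Ω`, then the convolution
`I_m = ∑_{k≥0} β_k J_{m+k}` solves the attenuated system
`∂̄I_m + ∂I_{m+2} + μ_t I_{m+1} = 0` on `Ω`. -/
theorem stmt_15 (Ω : Set ℂ) (hΩ : IsOpen Ω) (μt : ℂ → ℝ)
    (β : ℕ → ℂ → ℂ) (J : ℕ → ℂ → ℂ)
    (hβdiff : ∀ k : ℕ, ContDiffOn ℝ 1 (β k) Ω)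
    (hβsum : ∀ Kc : Set ℂ, Kc ⊆ Ω → IsCompact Kc →
      ∃ C : ℕ → ℝ, Summable C ∧ ∀ k : ℕ, ∀ z ∈ Kc,
        ‖β k z‖ ≤ C k ∧ ‖fderiv ℝ (β k) z‖ ≤ C k)
    (hb : ∀ z ∈ Ω, ∀ θ : ℝ,
      fderiv ℝ (fun w : ℂ => ∑' k : ℕ, β k w * Complex.exp ((k : ℂ) * (θ : ℂ) * Complex.I))
          z ((Real.cos θ : ℂ) + (Real.sin θ : ℂ) * Complex.I)
        = -(μt z : ℂ) * ∑' k : ℕ, β k z * Complex.exp ((k : ℂ) * (θ : ℂ) * Complex.I))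
    (hJdiff : ∀ m : ℕ, ContDiffOn ℝ 1 (J m) Ω)
    (hJsum : ∀ Kc : Set ℂ, Kc ⊆ Ω → IsCompact Kc →
      ∃ C : ℕ → ℝ, Summable C ∧ ∀ m : ℕ, ∀ z ∈ Kc,
        ‖J m z‖ ≤ C m ∧ ‖fderiv ℝ (J m) z‖ ≤ C m)
    (hJsys : ∀ m : ℕ, ∀ z ∈ Ω,
      wirtingerDBar (J m) z + wirtingerD (J (m + 2)) z = 0)
    (I : ℕ → ℂ → ℂ)
    (hI : ∀ m : ℕ, ∀ z : ℂ, I m z = ∑' k : ℕ, β k z * J (m + k) z) :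
    ∀ m : ℕ, ∀ z ∈ Ω,
      wirtingerDBar (I m) z + wirtingerD (I (m + 2)) z + (μt z : ℂ) * I (m + 1) z = 0 := by
  intro m z hz
  obtain ⟨r, hr, hrΩ⟩ := nhds_basis_closedBall.mem_iff.mp (hΩ.mem_nhds hz)
  have hz' := mem_ball_self hr (x := z)
  obtain ⟨Cβ, hCβ, hβ⟩ := exists_summable_c1BoundedOn_ball hΩ hβdiff hβsum hrΩ
  obtain ⟨CJ, hCJ, hJ⟩ := exists_summable_c1BoundedOn_ball hΩ hJdiff hJsum hrΩ
  have hJT : ∀ j, C1BoundedOn (J j) (ball z r) (∑' i, CJ i) := fun j =>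
    (hJ j).mono subset_rfl (hCJ.le_tsum j fun i _ => (hJ i).nonneg ⟨z, hz'⟩)
  obtain ⟨h0, h1, hrec⟩ := wirtinger_relations_of_transport hCβ hr hβ (hb z hz)
  have hWI : ∀ (c : ℂ) (n : ℕ), wirtingerCLM c (fderiv ℝ (I n) z) = ∑' k, (β k z *
      wirtingerCLM c (fderiv ℝ (J (n + k)) z) + J (n + k) z * wirtingerCLM c (fderiv ℝ (β k) z)) :=
    fun c n => by
      rw [funext (hI n)]
      exact wirtingerCLM_fderiv_tsum_mul c hCβ hr hβ fun k => hJT (n + k)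
  simp only [wirtingerDBar_eq_wirtingerCLM, wirtingerD_eq_wirtingerCLM] at hJsys h0 h1 hrec ⊢
  have hshift : ∀ i k, m + i + k = m + (k + i) := fun i k => by omega
  rw [hWI, hWI, hI]
  simp only [hshift]
  exact tsum_convolution_relation (a := fun k => β k z) (x := fun j => J (m + j) z)
    (p := fun k => wirtingerCLM (-Complex.I) (fderiv ℝ (β k) z))
    (q := fun k => wirtingerCLM Complex.I (fderiv ℝ (β k) z))
    (px := fun j => wirtingerCLM (-Complex.I) (fderiv ℝ (J (m + j)) z))
    (qx := fun j => wirtingerCLM Complex.I (fderiv ℝ (J (m + j)) z)) hCβ (fun k => (hβ k z hz').2.1)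
    (fun k => (hβ k).norm_wirtingerCLM_le hz' (by simp))
    (fun k => (hβ k).norm_wirtingerCLM_le hz' (by simp)) (fun j => (hJT _ z hz').2.1)
    (fun j => (hJT _).norm_wirtingerCLM_le hz' (by simp))
    (fun j => (hJT _).norm_wirtingerCLM_le hz' (by simp)) h0 h1 hrec fun j => hJsys (m + j) z hz
end
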